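/- There exist two colored multigraphs G and H on the same colored vertex set that have the same degree sequence and the same Joint Color Matrix but different Colored Degree Matrices. -/
import Mathlib


open Classical in
/-- The ℓ-colored degree of `v` (self-loops count twice). -/
noncomputable def cdeg {V L : Type} (c : V → L) (E : Multiset (Sym2 V)) (ℓ : L) (v : V) : ℕ :=
  (E.map (Sym2.lift ⟨fun a b =>
      (if a = v ∧ c b = ℓ then 1 else 0) + (if b = v ∧ c a = ℓ then 1 else 0),
      fun _ _ => add_comm _ _⟩)).sum

open Classical in
/-- The degree of `v` (self-loops count twice). -/
noncomputable def deg {V : Type} (E : Multiset (Sym2 V)) (v : V) : ℕ :=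
  (E.map (Sym2.lift ⟨fun a b =>
      (if a = v then 1 else 0) + (if b = v then 1 else 0),
      fun _ _ => add_comm _ _⟩)).sum

open Classical in
/-- Joint Color Matrix entry. -/
noncomputable def jcm {V L : Type} (c : V → L) (E : Multiset (Sym2 V)) (ℓ r : L) : ℕ :=
  Multiset.card (E.filter (fun e => Sym2.map c e = s(ℓ, r)))

/-- There exist two colored multigraphs on the same colored vertex set with the same
degree sequence and the same Joint Color Matrix, but different Colored Degree Matrices. -/
theorem exists_same_degseq_same_jcm_different_cdm :
    ∃ (V L : Type) (c : V → L) (E₁ E₂ : Multiset (Sym2 V)),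
      (∀ v : V, deg E₁ v = deg E₂ v) ∧
      (∀ ℓ r : L, jcm c E₁ ℓ r = jcm c E₂ ℓ r) ∧
      ¬ (∀ (ℓ : L) (v : V), cdeg c E₁ ℓ v = cdeg c E₂ ℓ v) := by
  refine ⟨Fin 4, Fin 3, ![0,0,1,2], {s(0,2), s(1,3)}, {s(0,3), s(1,2)}, ?_, ?_, ?_⟩
  · intro v
    fin_cases v <;> simp [deg]
  · intro ℓ r
    fin_cases ℓ <;> fin_cases r <;>
      simp [jcm, Multiset.filter_cons, Multiset.filter_singleton, Sym2.map_pair_eq, Sym2.eq_iff, Matrix.cons_val_zero,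
        Matrix.cons_val_one]
  · intro h
    have := h 1 0
    simp [cdeg] at this
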